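/- For all t ∈ ℝ, the nedian family satisfies Φ_N(t) = Φ_S(σ(t)) ∘ Φ_A(τ(t)) up to a nonzero scalar factor, where τ(t) = (1−t)/(1−2t) and σ(t) = (1−2t)²/(1−t+t²) (for t ≠ 1/2; both sides interpreted as homogeneous triples). -/

import Mathlib

/-! With `D = 1 - t + t²`, the given `σ` and `τ` satisfy `1 - σ = 3t(1 - t)/D` and
`στ = (1 - 2t)(1 - t)/D`, which turns `Φ_S(σ) ∘ Φ_A(τ) = (1 - σ, 1 + 2σ - 3στ, 1 - σ + 3στ)`
into `(3/D) • Φ_N(t)`; `D` never vanishes. -/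

/-- Cyclic convolution of two triples of reals. -/
def cconv (x y : ℝ × ℝ × ℝ) : ℝ × ℝ × ℝ :=
  (x.1 * y.1 + x.2.1 * y.2.2 + x.2.2 * y.2.1,
   x.1 * y.2.1 + x.2.1 * y.1 + x.2.2 * y.2.2,
   x.1 * y.2.2 + x.2.1 * y.2.1 + x.2.2 * y.1)

/-- The scaling family. -/
def ΦS (σ : ℝ) : ℝ × ℝ × ℝ := (1 + 2 * σ, 1 - σ, 1 - σ)

/-- The aliquot family. -/
def ΦA (τ : ℝ) : ℝ × ℝ × ℝ := (0, 1 - τ, τ)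

/-- The nedian family. -/
def ΦN (s : ℝ) : ℝ × ℝ × ℝ := ((1 - s) * s, s ^ 2, (1 - s) ^ 2)

lemma cconv_ΦS_ΦA (σ τ : ℝ) :
    cconv (ΦS σ) (ΦA τ) = (1 - σ, 1 + 2 * σ - 3 * (σ * τ), 1 - σ + 3 * (σ * τ)) := by
  simp only [cconv, ΦS, ΦA, Prod.mk.injEq]
  refine ⟨?_, ?_, ?_⟩ <;> ring

lemma one_sub_add_sq_pos (t : ℝ) : 0 < 1 - t + t ^ 2 := by
  nlinarith [sq_nonneg (t - 1 / 2)]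

lemma cconv_ΦS_ΦA_eq_smul_ΦN {t : ℝ} (ht : t ≠ 1 / 2) :
    cconv (ΦS ((1 - 2 * t) ^ 2 / (1 - t + t ^ 2))) (ΦA ((1 - t) / (1 - 2 * t))) =
      (3 / (1 - t + t ^ 2)) • ΦN t := by
  have hD : 1 - t + t ^ 2 ≠ 0 := (one_sub_add_sq_pos t).ne'
  have hk : 1 - 2 * t ≠ 0 := fun h => ht (by linarith)
  have hστ : (1 - 2 * t) ^ 2 / (1 - t + t ^ 2) * ((1 - t) / (1 - 2 * t)) =
      (1 - 2 * t) * (1 - t) / (1 - t + t ^ 2) := by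
    field_simp
  rw [cconv_ΦS_ΦA, hστ]
  simp only [ΦN, Prod.smul_mk, smul_eq_mul, Prod.mk.injEq]
  refine ⟨?_, ?_, ?_⟩ <;> field_simp <;> ring

theorem nedian_decomposition (t : ℝ) (ht : t ≠ 1 / 2) :
    ∃ lam : ℝ, lam ≠ 0 ∧
      ΦN t = lam • cconv (ΦS ((1 - 2 * t) ^ 2 / (1 - t + t ^ 2)))
                         (ΦA ((1 - t) / (1 - 2 * t))) := by
  have hD : 1 - t + t ^ 2 ≠ 0 := (one_sub_add_sq_pos t).ne'
  refine ⟨(1 - t + t ^ 2) / 3, by positivity, ?_⟩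
  have hlam : (1 - t + t ^ 2) / 3 * (3 / (1 - t + t ^ 2)) = 1 := by field_simp
  rw [cconv_ΦS_ΦA_eq_smul_ΦN ht, smul_smul, hlam, one_smul]
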